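/- Let A, B be real constants and suppose y : ℝ → ℝ is a positive smooth function defined on an interval of positive reals satisfying A x y(x) + B x / y(x) = 1 for all x in the interval. Then y satisfies the third-order ODE y''' - 3x² y'⁵/y⁴ - 3x y'⁴/y³ + 6 y'³/y² + 6 y'²/(x y) - 6 y'/x² = 0 on that interval. -/

import Mathlib

open scoped ContDiff

/-- If a differentiable function vanishes on an open interval, its derivative
vanishes there too. -/
lemma deriv_zero_of_zero_on_Ioo {f : ℝ → ℝ} {a b x g : ℝ}
    (hf : ∀ t ∈ Set.Ioo a b, f t = 0) (hx : x ∈ Set.Ioo a b)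
    (hg : HasDerivAt f g x) : g = 0 := by
  have heq : f =ᶠ[nhds x] (fun _ => (0 : ℝ)) :=
    Filter.eventuallyEq_of_mem (isOpen_Ioo.mem_nhds hx) hf
  have := heq.deriv_eq
  rw [hg.deriv] at this
  simpa using this

/-- The implicitly defined curves A x y + B x / y = 1 (eq. (53)) satisfy the
linearizable third-order ODE (52). -/
theorem stmt_3 (y : ℝ → ℝ) (A B a b : ℝ)
    (hy : ContDiff ℝ (⊤ : ℕ∞) y)
    (hx : ∀ x ∈ Set.Ioo a b, 0 < x)
    (hypos : ∀ x ∈ Set.Ioo a b, 0 < y x)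
    (hrel : ∀ x ∈ Set.Ioo a b, A * x * y x + B * x / y x = 1) :
    ∀ x ∈ Set.Ioo a b,
      deriv (deriv (deriv y)) x
        - 3 * x ^ 2 * (deriv y x) ^ 5 / (y x) ^ 4
        - 3 * x * (deriv y x) ^ 4 / (y x) ^ 3
        + 6 * (deriv y x) ^ 3 / (y x) ^ 2
        + 6 * (deriv y x) ^ 2 / (x * y x)
        - 6 * deriv y x / x ^ 2 = 0 := by
  -- smoothness of derivatives
  have hy' : ContDiff ℝ ((⊤ : ℕ∞) : WithTop ℕ∞) y := hy.of_le (by simp)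
  have hy1 : ContDiff ℝ ((⊤ : ℕ∞) : WithTop ℕ∞) (deriv y) := (contDiff_infty_iff_deriv.mp hy').2
  have hy2 : ContDiff ℝ ((⊤ : ℕ∞) : WithTop ℕ∞) (deriv (deriv y)) := (contDiff_infty_iff_deriv.mp hy1).2
  have hdy : ∀ x : ℝ, HasDerivAt y (deriv y x) x :=
    fun x => (hy.differentiable (by simp) x).hasDerivAt
  have hdy1 : ∀ x : ℝ, HasDerivAt (deriv y) (deriv (deriv y) x) x :=
    fun x => (hy1.differentiable (by simp) x).hasDerivAt
  have hdy2 : ∀ x : ℝ, HasDerivAt (deriv (deriv y)) (deriv (deriv (deriv y)) x) x :=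
    fun x => (hy2.differentiable (by simp) x).hasDerivAt
  -- polynomial form of relation: A x y^2 + B x - y = 0
  have hP0 : ∀ t ∈ Set.Ioo a b,
      A * t * (y t) ^ 2 + B * t - y t = 0 := by
    intro t ht
    have hv := (hypos t ht).ne'
    have h := hrel t ht
    field_simp at h
    nlinarith [h]
  -- first derivative relation
  have hP1 : ∀ t ∈ Set.Ioo a b,
      A * (y t) ^ 2 + A * t * (2 * y t * deriv y t) + B - deriv y t = 0 := by
    intro t ht
    have hD : HasDerivAt (fun s => A * s * (y s) ^ 2 + B * s - y s)
        (A * (y t) ^ 2 + A * t * (2 * y t * deriv y t) + B - deriv y t) t := by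
      have h1 : HasDerivAt (fun s => A * s) A t := by
        simpa using (hasDerivAt_id t).const_mul A
      have h2 : HasDerivAt (fun s => (y s) ^ 2) (2 * y t * deriv y t) t := by
        have := (hdy t).fun_pow 2
        simpa [mul_comm, mul_assoc, mul_left_comm] using this
      have h3 : HasDerivAt (fun s => B * s) B t := by
        simpa using (hasDerivAt_id t).const_mul B
      have := ((h1.mul h2).add h3).sub (hdy t)
      convert this using 1 <;> first | rfl | ring
    exact deriv_zero_of_zero_on_Ioo hP0 ht hD
  -- second derivative relation
  have hP2 : ∀ t ∈ Set.Ioo a b,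
      4 * A * y t * deriv y t + 2 * A * t * (deriv y t) ^ 2
        + 2 * A * t * y t * deriv (deriv y) t - deriv (deriv y) t = 0 := by
    intro t ht
    have hD : HasDerivAt (fun s => A * (y s) ^ 2 + A * s * (2 * y s * deriv y s) + B - deriv y s)
        (4 * A * y t * deriv y t + 2 * A * t * (deriv y t) ^ 2
          + 2 * A * t * y t * deriv (deriv y) t - deriv (deriv y) t) t := by
      have h2 : HasDerivAt (fun s => A * (y s) ^ 2) (A * (2 * y t * deriv y t)) t := by
        have := ((hdy t).pow 2).const_mul A
        simpa [mul_comm, mul_assoc, mul_left_comm] using this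
      have h1 : HasDerivAt (fun s => A * s) A t := by
        simpa using (hasDerivAt_id t).const_mul A
      have h3 : HasDerivAt (fun s => 2 * y s * deriv y s)
          (2 * deriv y t * deriv y t + 2 * y t * deriv (deriv y) t) t := by
        have := (((hdy t).const_mul 2).mul (hdy1 t))
        convert this using 1 <;> first | rfl | ring
      have h4 : HasDerivAt (fun s => A * s * (2 * y s * deriv y s))
          (A * (2 * y t * deriv y t)
            + A * t * (2 * deriv y t * deriv y t + 2 * y t * deriv (deriv y) t)) t :=
        h1.mul h3
      have := ((h2.add h4).add_const B).sub (hdy1 t)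
      convert this using 1 <;> first | rfl | ring
    exact deriv_zero_of_zero_on_Ioo hP1 ht hD
  -- third derivative relation
  have hP3 : ∀ t ∈ Set.Ioo a b,
      6 * A * (deriv y t) ^ 2 + 6 * A * y t * deriv (deriv y) t
        + 6 * A * t * deriv y t * deriv (deriv y) t
        + 2 * A * t * y t * deriv (deriv (deriv y)) t
        - deriv (deriv (deriv y)) t = 0 := by
    intro t ht
    have hD : HasDerivAt (fun s => 4 * A * y s * deriv y s + 2 * A * s * (deriv y s) ^ 2
        + 2 * A * s * y s * deriv (deriv y) s - deriv (deriv y) s)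
        (6 * A * (deriv y t) ^ 2 + 6 * A * y t * deriv (deriv y) t
          + 6 * A * t * deriv y t * deriv (deriv y) t
          + 2 * A * t * y t * deriv (deriv (deriv y)) t
          - deriv (deriv (deriv y)) t) t := by
      have h1 : HasDerivAt (fun s => 4 * A * y s * deriv y s)
          (4 * A * deriv y t * deriv y t + 4 * A * y t * deriv (deriv y) t) t := by
        have := ((hdy t).const_mul (4 * A)).mul (hdy1 t)
        convert this using 1 <;> first | rfl | ring
      have h2 : HasDerivAt (fun s => 2 * A * s * (deriv y s) ^ 2)
          (2 * A * (deriv y t) ^ 2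
            + 2 * A * t * (2 * deriv y t * deriv (deriv y) t)) t := by
        have ha : HasDerivAt (fun s => 2 * A * s) (2 * A) t := by
          simpa using (hasDerivAt_id t).const_mul (2 * A)
        have hb : HasDerivAt (fun s => (deriv y s) ^ 2)
            (2 * deriv y t * deriv (deriv y) t) t := by
          have := (hdy1 t).fun_pow 2
          simpa [mul_comm, mul_assoc, mul_left_comm] using this
        exact ha.mul hb
      have h3 : HasDerivAt (fun s => 2 * A * s * y s * deriv (deriv y) s)
          ((2 * A * y t + 2 * A * t * deriv y t) * deriv (deriv y) t
            + 2 * A * t * y t * deriv (deriv (deriv y)) t) t := by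
        have ha : HasDerivAt (fun s => 2 * A * s) (2 * A) t := by
          simpa using (hasDerivAt_id t).const_mul (2 * A)
        have hb : HasDerivAt (fun s => 2 * A * s * y s)
            (2 * A * y t + 2 * A * t * deriv y t) t := by
          have := ha.mul (hdy t)
          convert this using 1 <;> first | rfl | ring
        exact hb.mul (hdy2 t)
      have := ((h1.add h2).add h3).sub (hdy2 t)
      convert this using 1 <;> first | rfl | ring
    exact deriv_zero_of_zero_on_Ioo hP2 ht hD
  -- now the pointwise algebra
  intro x hxab
  have hx0 : (0:ℝ) < x := hx x hxab
  have hv0 : (0:ℝ) < y x := hypos x hxab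
  have hxne : x ≠ 0 := hx0.ne'
  have hvne : y x ≠ 0 := hv0.ne'
  have e0 := hP0 x hxab
  have e1 := hP1 x hxab
  have e2 := hP2 x hxab
  have e3 := hP3 x hxab
  set v := y x with hv
  set p := deriv y x with hp
  set q := deriv (deriv y) x with hq
  set r := deriv (deriv (deriv y)) x with hr
  -- key elimination: 2*A*x^2*v*p = x*p - v
  have hE1 : 2 * A * x ^ 2 * v * p = x * p - v := by linear_combination x * e1 - e0
  have hE2 : q * x * v ^ 2 = p * (x * p - v) * (x * p + 2 * v) := by
    linear_combination (-(x ^ 2 * v * p)) * e2 + (x * v * q + p * (x * p + 2 * v)) * hE1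
  have hE3 : r * x * v ^ 2
      = 3 * (x * p - v) * (p ^ 2 + v * q + x * p * q) := by
    linear_combination (-(x ^ 2 * v * p)) * e3
      + (x * v * r + 3 * (p ^ 2 + v * q + x * p * q)) * hE1
  have hq' : q = p * (x * p - v) * (x * p + 2 * v) / (x * v ^ 2) := by
    rw [eq_div_iff (by positivity)]
    linear_combination hE2
  have hr' : r = 3 * (x * p - v) * (p ^ 2 + v * q + x * p * q) / (x * v ^ 2) := by
    rw [eq_div_iff (by positivity)]
    linear_combination hE3
  rw [hr', hq']
  field_simp
  ring
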